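/- Let t₁ and t₂ be red-black trees with black heights n₁ and n₂ respectively, and let a be a key. Then the cost of Join(t₁, a, t₂), i.e., the number of recursive calls to JoinRight (or symmetrically JoinLeft) it performs, is at most 1 + 2(max(n₁, n₂) − min(n₁, n₂)). -/
import Mathlib


/-- Node colors for red-black trees. -/
inductive Color where
  | red : Color
  | black : Color
deriving DecidableEq

/-- Plain binary trees with colored nodes. -/
inductive RBTree (α : Type) where
  | leaf : RBTree α
  | node : Color → RBTree α → α → RBTree α → RBTree α

namespace RBTree

variable {α : Type}

/-- The black height of a tree (computed along the left spine). -/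
def blackHeight : RBTree α → ℕ
  | leaf => 0
  | node Color.red l _ _ => blackHeight l
  | node Color.black l _ _ => blackHeight l + 1

/-- The color of the root; leaves count as black. -/
def rootColor : RBTree α → Color
  | leaf => Color.black
  | node c _ _ _ => c

/-- In-order traversal. -/
def inorder : RBTree α → List α
  | leaf => []
  | node _ l a r => inorder l ++ a :: inorder r

/-- Number of internal (key-carrying) nodes. -/
def size : RBTree α → ℕ
  | leaf => 0
  | node _ l _ r => size l + 1 + size r

/-- `IsRBT t y n` means `t` is a valid red-black tree with root color `y`
and black height `n`, mirroring the indexed inductive family `irbt`. -/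
inductive IsRBT : RBTree α → Color → ℕ → Prop where
  | leaf : IsRBT leaf Color.black 0
  | red {t₁ t₂ : RBTree α} {n : ℕ} (a : α) :
      IsRBT t₁ Color.black n → IsRBT t₂ Color.black n →
      IsRBT (node Color.red t₁ a t₂) Color.red n
  | black {t₁ t₂ : RBTree α} {y₁ y₂ : Color} {n : ℕ} (a : α) :
      IsRBT t₁ y₁ n → IsRBT t₂ y₂ n →
      IsRBT (node Color.black t₁ a t₂) Color.black (n + 1)

end RBTree
namespace RBTree

variable {α : Type}

/-- The cost of `JoinRight`: the number of recursive invocations of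
`JoinRight` performed (each recursive call incurs unit cost; the
non-recursive rebalancing cases incur zero cost). -/
def joinRightCost : RBTree α → α → RBTree α → ℕ
  | leaf, _, _ => 0
  | node Color.red _ _ t₁₂, a, t₂ => 1 + joinRightCost t₁₂ a t₂
  | node Color.black t₁₁ a₁ t₁₂, a, t₂ =>
      if blackHeight (node Color.black t₁₁ a₁ t₁₂) = blackHeight t₂ + 1 then 0
      else 1 + joinRightCost t₁₂ a t₂

/-- The cost of `JoinLeft`, symmetrically. -/
def joinLeftCost : RBTree α → α → RBTree α → ℕ
  | _, _, leaf => 0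
  | t₁, a, node Color.red t₂₁ _ _ => 1 + joinLeftCost t₁ a t₂₁
  | t₁, a, node Color.black t₂₁ a₂ t₂₂ =>
      if blackHeight (node Color.black t₂₁ a₂ t₂₂) = blackHeight t₁ + 1 then 0
      else 1 + joinLeftCost t₁ a t₂₁

/-- The cost of `Join`: the number of recursive invocations of
`JoinRight`/`JoinLeft` performed (the equal-height case and the final
recoloring incur zero cost). -/
def joinCost (t₁ : RBTree α) (a : α) (t₂ : RBTree α) : ℕ :=
  if blackHeight t₂ < blackHeight t₁ then joinRightCost t₁ a t₂
  else if blackHeight t₁ < blackHeight t₂ then joinLeftCost t₁ a t₂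
  else 0

end RBTree

namespace RBTree

theorem bh_eq {α : Type} {t : RBTree α} {y : Color} {n : ℕ}
    (h : IsRBT t y n) : blackHeight t = n := by
  induction h <;> simp [blackHeight, *]

theorem jr_bound {α : Type} (a : α) (t₂ : RBTree α) {n₂ : ℕ}
    (hbh : blackHeight t₂ = n₂) :
    ∀ {t₁ : RBTree α} {y₁ : Color} {n₁ : ℕ}, IsRBT t₁ y₁ n₁ → n₂ < n₁ →
      joinRightCost t₁ a t₂ + (if y₁ = Color.black then 2 else 1) ≤ 2 * (n₁ - n₂) := by
  intro t₁ y₁ n₁ h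
  induction h with
  | leaf => intro h; omega
  | red a' hl hr ihl ihr =>
      intro hlt
      have := ihr hlt
      simp only [joinRightCost] at *
      simp at this ⊢
      omega
  | black a' hl hr ihl ihr =>
      intro hlt
      rename_i t₁₁ t₁₂ c₁ c₂ n
      simp only [joinRightCost, blackHeight, bh_eq hl, hbh]
      split_ifs with hc
      · omega
      · have hn : n₂ < n := by omega
        have := ihr hn
        rcases c₂ <;> simp at this ⊢ <;> omega

theorem jl_bound {α : Type} (a : α) (t₁ : RBTree α) {n₁ : ℕ}
    (hbh : blackHeight t₁ = n₁) :
    ∀ {t₂ : RBTree α} {y₂ : Color} {n₂ : ℕ}, IsRBT t₂ y₂ n₂ → n₁ < n₂ →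
      joinLeftCost t₁ a t₂ + (if y₂ = Color.black then 2 else 1) ≤ 2 * (n₂ - n₁) := by
  intro t₂ y₂ n₂ h
  induction h with
  | leaf => intro h; omega
  | red a' hl hr ihl ihr =>
      intro hlt
      have := ihl hlt
      simp only [joinLeftCost] at *
      simp at this ⊢
      omega
  | black a' hl hr ihl ihr =>
      intro hlt
      rename_i t₂₁ t₂₂ c₁ c₂ n
      simp only [joinLeftCost, blackHeight, bh_eq hl, hbh]
      split_ifs with hc
      · omega
      · have hn : n₁ < n := by omega
        have := ihl hn
        rcases c₁ <;> simp at this ⊢ <;> omega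

end RBTree

/-- **Cost of Join.**  Let `t₁` and `t₂` be red-black trees with black
heights `n₁` and `n₂` respectively, and let `a` be a key.  Then the cost of
`Join(t₁, a, t₂)` — the number of recursive calls to `JoinRight` (or
symmetrically `JoinLeft`) it performs — is at most
`1 + 2 * (max n₁ n₂ - min n₁ n₂)`. -/

theorem join_cost_bound {α : Type} {y₁ y₂ : Color} {n₁ n₂ : ℕ}
    (t₁ : RBTree α) (a : α) (t₂ : RBTree α)
    (h₁ : RBTree.IsRBT t₁ y₁ n₁) (h₂ : RBTree.IsRBT t₂ y₂ n₂) :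
    RBTree.joinCost t₁ a t₂ ≤ 1 + 2 * (max n₁ n₂ - min n₁ n₂) := by
  have b₁ := RBTree.bh_eq h₁
  have b₂ := RBTree.bh_eq h₂
  unfold RBTree.joinCost
  split_ifs with hc hc2
  · have := RBTree.jr_bound a t₂ b₂ h₁ (by omega)
    rcases y₁ <;> simp at this <;> omega
  · have := RBTree.jl_bound a t₁ b₁ h₂ (by omega)
    rcases y₂ <;> simp at this <;> omega
  · omega
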